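/- For one-row tableaux b ∈ B^{1,s} and b' ∈ B^{1,s'} over the two-letter alphabet {1,2}, with b containing m letters 2 and b' containing m' letters 2, the energy H(b ⊗ b') equals the number of boxes of (b' ← row(b)) in the second row of the resulting tableau, and this number is min over an explicit combinatorial matching; in particular 0 ≤ H(b ⊗ b') ≤ min(s, s', m + (s' − m')) where appropriate, and H(b ⊗ b') = 0 whenever b' is the all-1 row. -/

import Mathlib

/-- Schensted row insertion into a single row: returns the new row and the bumped entry. -/
def insertRow : List ℕ → ℕ → List ℕ × Option ℕ
  | [], x => ([x], none)
  | y :: ys, x =>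
    if x < y then (x :: ys, some y)
    else
      let p := insertRow ys x
      (y :: p.1, p.2)

/-- Schensted row insertion of a letter into a tableau (list of rows). -/
def rsInsert : List (List ℕ) → ℕ → List (List ℕ)
  | [], x => [[x]]
  | r :: rs, x =>
    match (insertRow r x).2 with
    | none => (insertRow r x).1 :: rs
    | some y => (insertRow r x).1 :: rsInsert rs y

/-- Successive insertion of a word. -/
def rsInsertWord (Y : List (List ℕ)) (w : List ℕ) : List (List ℕ) :=
  w.foldl rsInsert Y

/-- The row word of a tableau: rows read from bottom to top. -/
def rowWord (Y : List (List ℕ)) : List ℕ := Y.reverse.flatten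

/-- Length of the `i`-th row (the shape of the tableau). -/
def shapeAt (Y : List (List ℕ)) (i : ℕ) : ℕ := (Y.getD i []).length

/-- The highest element of `B^{r,s}`: row `i` filled with `i`. -/
def highestTab (r s : ℕ) : List (List ℕ) :=
  (List.range r).map fun i => List.replicate s (i + 1)

/-- Energy function: number of boxes of `(b' ← row(b))` outside the
concatenation of the shapes of `b` and `b'`. -/
def energyH (b b' : List (List ℕ)) : ℕ :=
  let Z := rsInsertWord b' (rowWord b)
  ∑ i ∈ Finset.range Z.length, (shapeAt Z i - (shapeAt b i + shapeAt b' i))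

/-- Semistandard Young tableau: rows weakly increasing, nonempty,
shape weakly decreasing, and columns strictly increasing. -/
def IsSSYT (Y : List (List ℕ)) : Prop :=
  (∀ r ∈ Y, List.Chain' (· ≤ ·) r) ∧
  (∀ r ∈ Y, r ≠ []) ∧
  List.Chain' (fun r s => s.length ≤ r.length ∧
    ∀ i < s.length, r.getD i 0 < s.getD i 0) Y


/-- The one-row tableau of length `s` over `{1,2}` with `m` letters `2`. -/
def oneRow (s m : ℕ) : List ℕ := List.replicate (s - m) 1 ++ List.replicate m 2

/-!
Reading `row(b) = 1^(s-m) 2^m` into the row `1^(s'-m') 2^m'`, each letter `1` bumps the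
leftmost `2` of the first row (if there is one) into the second row, where it lands at the end,
and each letter `2` is appended to the first row. Hence `(b' ← row(b))` has second row
`2^min(s-m, m')` and a first row that accounts for all remaining boxes, so the only boxes outside
the concatenated shape are those of the second row: `H(b ⊗ b') = min(s - m, m')`.
-/

open List

lemma insertRow_of_forall_le (r : List ℕ) (x : ℕ) (h : ∀ y ∈ r, y ≤ x) :
    insertRow r x = (r ++ [x], none) := by
  induction r with
  | nil => rfl
  | cons y ys ih =>
    have hy : ¬ x < y := Nat.not_lt.2 (h y mem_cons_self)
    simp [insertRow, hy, ih fun z hz => h z (mem_cons_of_mem _ hz)]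

lemma insertRow_replicate_append_cons {x y : ℕ} (hxy : x < y) (a : ℕ) (l : List ℕ) :
    insertRow (replicate a x ++ y :: l) x = (replicate (a + 1) x ++ l, some y) := by
  induction a with
  | zero => simp [insertRow, hxy]
  | succ n ih => simp [replicate_succ, insertRow, ih]

lemma rsInsertWord_cons (Y : List (List ℕ)) (x : ℕ) (w : List ℕ) :
    rsInsertWord Y (x :: w) = rsInsertWord (rsInsert Y x) w := rfl

lemma rsInsertWord_append (Y : List (List ℕ)) (w w' : List ℕ) :
    rsInsertWord Y (w ++ w') = rsInsertWord (rsInsertWord Y w) w' :=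
  foldl_append

def twoRowTab (a b j : ℕ) : List (List ℕ) :=
  (replicate a 1 ++ replicate b 2) :: if j = 0 then [] else [replicate j 2]

lemma shapeAt_twoRowTab_one (a b j : ℕ) : shapeAt (twoRowTab a b j) 1 = j := by
  by_cases hj : j = 0 <;> simp [twoRowTab, shapeAt, hj]

lemma rsInsert_twoRowTab_two (a b j : ℕ) : rsInsert (twoRowTab a b j) 2 = twoRowTab a (b + 1) j := by
  have hle : ∀ y ∈ replicate a 1 ++ replicate b 2, y ≤ 2 := by
    intro y hy
    rcases mem_append.1 hy with h | h <;> simp [eq_of_mem_replicate h]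
  simp [twoRowTab, rsInsert, insertRow_of_forall_le _ _ hle, replicate_succ']

lemma rsInsert_twoRowTab_one_zero (a j : ℕ) :
    rsInsert (twoRowTab a 0 j) 1 = twoRowTab (a + 1) 0 j := by
  have hle : ∀ y ∈ replicate a 1, y ≤ 1 := fun y hy => (eq_of_mem_replicate hy).le
  simp [twoRowTab, rsInsert, insertRow_of_forall_le _ _ hle, replicate_succ']

lemma rsInsert_twoRowTab_one_succ (a b j : ℕ) :
    rsInsert (twoRowTab a (b + 1) j) 1 = twoRowTab (a + 1) b (j + 1) := by
  have hbump := insertRow_replicate_append_cons one_lt_two a (replicate b 2)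
  rcases Nat.eq_zero_or_pos j with rfl | hj
  · simp [twoRowTab, rsInsert, replicate_succ, hbump]
  · have hle : ∀ y ∈ replicate j 2, y ≤ 2 := fun y hy => (eq_of_mem_replicate hy).le
    simp [twoRowTab, rsInsert, replicate_succ, hbump, hj.ne', insertRow_of_forall_le _ _ hle,
      ← replicate_succ']

lemma rsInsertWord_twoRowTab_replicate_two (n a b j : ℕ) :
    rsInsertWord (twoRowTab a b j) (replicate n 2) = twoRowTab a (b + n) j := by
  induction n generalizing b with
  | zero => rfl
  | succ n ih => rw [replicate_succ, rsInsertWord_cons, rsInsert_twoRowTab_two, ih, add_right_comm, add_assoc]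

lemma rsInsertWord_twoRowTab_replicate_one (n a b j : ℕ) :
    rsInsertWord (twoRowTab a b j) (replicate n 1) = twoRowTab (a + n) (b - n) (j + min n b) := by
  induction n generalizing a b j with
  | zero => simp [rsInsertWord]
  | succ n ih =>
    rw [replicate_succ, rsInsertWord_cons]
    cases b with
    | zero => rw [rsInsert_twoRowTab_one_zero, ih]; congr 1 <;> omega
    | succ b => rw [rsInsert_twoRowTab_one_succ, ih]; congr 1 <;> omega

lemma rsInsertWord_oneRow (s s' m m' : ℕ) :
    rsInsertWord [oneRow s' m'] (oneRow s m)
      = twoRowTab (s' - m' + (s - m)) (m' - (s - m) + m) (min (s - m) m') := by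
  have hb' : [oneRow s' m'] = twoRowTab (s' - m') m' 0 := by simp [oneRow, twoRowTab]
  rw [hb', oneRow, rsInsertWord_append, rsInsertWord_twoRowTab_replicate_one,
    rsInsertWord_twoRowTab_replicate_two, zero_add]

lemma energyH_singleton_of_rsInsertWord_eq_twoRowTab {r r' : List ℕ} {a b j : ℕ}
    (hZ : rsInsertWord [r'] r = twoRowTab a b j) (hsize : a + b + j = r.length + r'.length) :
    energyH [r] [r'] = j := by
  have hword : rowWord [r] = r := by simp [rowWord]
  simp only [energyH, hword, hZ]
  rcases Nat.eq_zero_or_pos j with rfl | hj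
  · simp [twoRowTab, shapeAt]
    omega
  · simp [twoRowTab, hj.ne', Finset.sum_range_succ, shapeAt]
    omega

theorem energy_one_row_A1_general (s s' m m' : ℕ) (hm' : m' ≤ s') :
    energyH [oneRow s m] [oneRow s' m']
      = shapeAt (rsInsertWord [oneRow s' m'] (oneRow s m)) 1 ∧
    energyH [oneRow s m] [oneRow s' m'] ≤ min s s' ∧
    (m' = 0 → energyH [oneRow s m] [oneRow s' m'] = 0) := by
  have hZ := rsInsertWord_oneRow s s' m m'
  have hH : energyH [oneRow s m] [oneRow s' m'] = min (s - m) m' :=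
    energyH_singleton_of_rsInsertWord_eq_twoRowTab hZ (by simp [oneRow]; omega)
  refine ⟨by rw [hH, hZ, shapeAt_twoRowTab_one], by rw [hH]; omega, fun h => by rw [hH, h, min_zero]⟩

/-- For one-row tableaux over `{1,2}`, the energy `H(b ⊗ b')` equals the
number of boxes in the second row of `(b' ← row(b))`; it satisfies
`0 ≤ H ≤ min(s, s')` and vanishes when `b'` is the all-`1` row. -/
theorem energy_one_row_A1 (s s' m m' : ℕ) (hm : m ≤ s) (hm' : m' ≤ s') :
    energyH [oneRow s m] [oneRow s' m']
      = shapeAt (rsInsertWord [oneRow s' m'] (oneRow s m)) 1 ∧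
    energyH [oneRow s m] [oneRow s' m'] ≤ min s s' ∧
    (m' = 0 → energyH [oneRow s m] [oneRow s' m'] = 0) :=
  energy_one_row_A1_general s s' m m' hm'
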